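/- Let d be a nonnegative integer and 0 < q < p < ∞. If f(x) = Σ_{j=0}^d a_j (1-x)^j (x+1)^{d-j} with all a_j ≥ 0, then (∫_{-1}^1 f(x)^p dx)^{1/p} ≤ ((qd+1)/2)^{1/q - 1/p} (∫_{-1}^1 f(x)^q dx)^{1/q}. -/

import Mathlib

/-!
Let `y` be a maximum point of `f` on `[-1, 1]`. Comparing the Lorentz representation termwise gives
`f x ≥ ((1 - x) / (1 - y)) ^ d * f y` for `x ≥ y` and `f x ≥ ((x + 1) / (y + 1)) ^ d * f y`
for `x ≤ y`. Integrating the `q`-th powers of these bounds over `[y, 1]` and `[-1, y]` yields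
`‖f‖_∞ ^ q ≤ (q d + 1) / 2 * ‖f‖_q ^ q`, and then `‖f‖_p ^ p ≤ ‖f‖_∞ ^ (p - q) * ‖f‖_q ^ q`
gives the inequality.
-/

open Finset Set MeasureTheory

theorem mul_div_le_integral_of_rpow_mul_le {g : ℝ → ℝ} {c s y : ℝ} (hs : 0 ≤ s) (hy : y ≤ 1)
    (hg : IntervalIntegrable g volume y 1)
    (h : ∀ x ∈ Icc y 1, (1 - x) ^ s * c ≤ (1 - y) ^ s * g x) :
    c * ((1 - y) / (s + 1)) ≤ ∫ x in y..1, g x := by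
  rcases hy.eq_or_lt with rfl | hy
  · simp
  have hpos : 0 < 1 - y := by linarith
  have hweight : ∫ x in y..1, (1 - x) ^ s * c = (1 - y) ^ s * (c * ((1 - y) / (s + 1))) := by
    rw [intervalIntegral.integral_mul_const, intervalIntegral.integral_comp_sub_left
      (fun t : ℝ => t ^ s), sub_self, integral_rpow (Or.inl (by linarith)),
      Real.zero_rpow (by linarith), Real.rpow_add hpos, Real.rpow_one]
    ring
  have hint : IntervalIntegrable (fun x : ℝ => (1 - x) ^ s * c) volume y 1 :=
    (((continuous_const.sub continuous_id).rpow_const fun _ => Or.inr hs).mul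
      continuous_const).intervalIntegrable _ _
  have hmono := intervalIntegral.integral_mono_on hy.le hint (hg.const_mul ((1 - y) ^ s)) h
  rw [hweight, intervalIntegral.integral_const_mul] at hmono
  exact le_of_mul_le_mul_left hmono (Real.rpow_pos_of_pos hpos s)

theorem rpow_one_div_le_of_le_rpow_sub_mul {I J M C p q : ℝ} (hq : 0 < q) (hqp : q ≤ p)
    (hI : 0 ≤ I) (hJ : 0 ≤ J) (hM : 0 ≤ M) (hC : 0 ≤ C) (hIJ : I ≤ M ^ (p - q) * J)
    (hMJ : M ^ q ≤ C * J) : I ^ (1 / p) ≤ C ^ (1 / q - 1 / p) * J ^ (1 / q) := by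
  have hp : 0 < p := hq.trans_le hqp
  have he : 0 ≤ (p - q) / q := div_nonneg (sub_nonneg.2 hqp) hq.le
  have hI_le : I ≤ C ^ ((p - q) / q) * J ^ (p / q) :=
    calc I ≤ (M ^ q) ^ ((p - q) / q) * J := by
          rwa [← Real.rpow_mul hM, mul_div_cancel₀ _ hq.ne']
      _ ≤ (C * J) ^ ((p - q) / q) * J := by gcongr
      _ = C ^ ((p - q) / q) * J ^ (p / q) := by
          rw [Real.mul_rpow hC hJ, mul_assoc, ← Real.rpow_add_one' hJ (by positivity)]
          congr 2
          field_simp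
          ring
  calc I ^ (1 / p) ≤ (C ^ ((p - q) / q) * J ^ (p / q)) ^ (1 / p) := by gcongr
    _ = C ^ (1 / q - 1 / p) * J ^ (1 / q) := by
        rw [Real.mul_rpow (by positivity) (by positivity), ← Real.rpow_mul hC,
          ← Real.rpow_mul hJ]
        congr 2 <;> field_simp

theorem intervalIntegral_rpow_le_rpow_sub_mul {g : ℝ → ℝ} {a b M p q : ℝ} (hab : a ≤ b)
    (hq : 0 < q) (hqp : q ≤ p) (hg : ContinuousOn g (Icc a b)) (hg0 : ∀ x ∈ Icc a b, 0 ≤ g x)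
    (hgM : ∀ x ∈ Icc a b, g x ≤ M) :
    ∫ x in a..b, g x ^ p ≤ M ^ (p - q) * ∫ x in a..b, g x ^ q := by
  have hint : ∀ r : ℝ, 0 ≤ r → IntervalIntegrable (fun x => g x ^ r) volume a b :=
    fun r hr =>
      ((hg.rpow_const fun _ _ => Or.inr hr).mono (uIcc_of_le hab).subset).intervalIntegrable
  rw [← intervalIntegral.integral_const_mul]
  refine intervalIntegral.integral_mono_on hab (hint p (hq.le.trans hqp))
    ((hint q hq.le).const_mul _) fun x hx => ?_
  calc g x ^ p = g x ^ (p - q) * g x ^ q := by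
        rw [← Real.rpow_add' (hg0 x hx) (by linarith), sub_add_cancel]
    _ ≤ M ^ (p - q) * g x ^ q := by
        have := hg0 x hx
        gcongr
        exact hgM x hx

theorem intervalIntegral_rpow_one_div_le_of_rpow_le {g : ℝ → ℝ} {a b M C p q : ℝ} (hab : a ≤ b)
    (hq : 0 < q) (hqp : q ≤ p) (hg : ContinuousOn g (Icc a b)) (hg0 : ∀ x ∈ Icc a b, 0 ≤ g x)
    (hgM : ∀ x ∈ Icc a b, g x ≤ M) (hC : 0 ≤ C) (hMC : M ^ q ≤ C * ∫ x in a..b, g x ^ q) :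
    (∫ x in a..b, g x ^ p) ^ (1 / p) ≤
      C ^ (1 / q - 1 / p) * (∫ x in a..b, g x ^ q) ^ (1 / q) := by
  have hint_nonneg : ∀ r : ℝ, 0 ≤ ∫ x in a..b, g x ^ r := fun r =>
    intervalIntegral.integral_nonneg hab fun x hx => Real.rpow_nonneg (hg0 x hx) r
  exact rpow_one_div_le_of_le_rpow_sub_mul hq hqp (hint_nonneg p) (hint_nonneg q)
    ((hg0 a ⟨le_rfl, hab⟩).trans (hgM a ⟨le_rfl, hab⟩)) hC
    (intervalIntegral_rpow_le_rpow_sub_mul hab hq hqp hg hg0 hgM) hMC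

def lorentzPoly (d : ℕ) (A : ℕ → ℝ) (x : ℝ) : ℝ :=
  ∑ j ∈ range (d + 1), A j * (1 - x) ^ j * (x + 1) ^ (d - j)

section Lorentz

variable {d : ℕ} {A : ℕ → ℝ} {q y : ℝ}

theorem continuous_lorentzPoly (d : ℕ) (A : ℕ → ℝ) : Continuous (lorentzPoly d A) := by
  unfold lorentzPoly
  fun_prop

theorem lorentzPoly_nonneg (hA : ∀ j ≤ d, 0 ≤ A j) {x : ℝ} (hx : x ∈ Icc (-1 : ℝ) 1) :
    0 ≤ lorentzPoly d A x := by
  refine sum_nonneg fun j hj => ?_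
  have := hA j (Nat.lt_succ_iff.mp (mem_range.mp hj))
  have := sub_nonneg.2 hx.2
  have := neg_le_iff_add_nonneg.1 hx.1
  positivity

theorem lorentzPoly_neg (d : ℕ) (A : ℕ → ℝ) (x : ℝ) :
    lorentzPoly d A (-x) = lorentzPoly d (fun j => A (d - j)) x := by
  rw [lorentzPoly, lorentzPoly, ← sum_range_reflect]
  refine sum_congr rfl fun j hj => ?_
  have hjd : j ≤ d := Nat.lt_succ_iff.mp (mem_range.mp hj)
  rw [Nat.add_sub_cancel, Nat.sub_sub_self hjd]
  ring

theorem pow_mul_lorentzPoly_le (hA : ∀ j ≤ d, 0 ≤ A j) {x y : ℝ} (hy : -1 ≤ y) (hyx : y ≤ x)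
    (hx : x ≤ 1) : (1 - x) ^ d * lorentzPoly d A y ≤ (1 - y) ^ d * lorentzPoly d A x := by
  rw [lorentzPoly, lorentzPoly, mul_sum, mul_sum]
  refine sum_le_sum fun j hj => ?_
  have hjd : j ≤ d := Nat.lt_succ_iff.mp (mem_range.mp hj)
  have hAj := hA j hjd
  obtain ⟨k, rfl⟩ := Nat.exists_eq_add_of_le hjd
  have h1x : 0 ≤ 1 - x := by linarith
  have h1y : 0 ≤ 1 - y := by linarith
  have hy1 : 0 ≤ y + 1 := by linarith
  -- `(1 - y) (x + 1) - (1 - x) (y + 1) = 2 (x - y)`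
  have hcross : (1 - x) * (y + 1) ≤ (1 - y) * (x + 1) := by nlinarith
  rw [Nat.add_sub_cancel_left]
  calc (1 - x) ^ (j + k) * (A j * (1 - y) ^ j * (y + 1) ^ k)
      = A j * ((1 - x) ^ j * (1 - y) ^ j) * ((1 - x) * (y + 1)) ^ k := by rw [mul_pow]; ring
    _ ≤ A j * ((1 - x) ^ j * (1 - y) ^ j) * ((1 - y) * (x + 1)) ^ k := by gcongr
    _ = (1 - y) ^ (j + k) * (A j * (1 - x) ^ j * (x + 1) ^ k) := by rw [mul_pow]; ring

theorem lorentzPoly_rpow_mul_le_integral_right (hA : ∀ j ≤ d, 0 ≤ A j) (hq : 0 < q)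
    (hy : y ∈ Icc (-1 : ℝ) 1) :
    lorentzPoly d A y ^ q * ((1 - y) / (q * d + 1)) ≤ ∫ x in y..1, lorentzPoly d A x ^ q := by
  refine mul_div_le_integral_of_rpow_mul_le (by positivity) hy.2
    (((continuous_lorentzPoly d A).rpow_const fun _ => Or.inr hq.le).intervalIntegrable _ _)
    fun x hx => ?_
  have h1x : 0 ≤ 1 - x := sub_nonneg.2 hx.2
  have h1y : 0 ≤ 1 - y := sub_nonneg.2 hy.2
  have hLx := lorentzPoly_nonneg hA ⟨hy.1.trans hx.1, hx.2⟩
  have hLy := lorentzPoly_nonneg hA hy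
  have := Real.rpow_le_rpow (by positivity) (pow_mul_lorentzPoly_le hA hy.1 hx.1 hx.2) hq.le
  rwa [Real.mul_rpow (by positivity) hLy, Real.mul_rpow (by positivity) hLx,
    ← Real.rpow_natCast_mul h1x, ← Real.rpow_natCast_mul h1y, mul_comm (d : ℝ)] at this

theorem lorentzPoly_rpow_mul_le_integral_left (hA : ∀ j ≤ d, 0 ≤ A j) (hq : 0 < q)
    (hy : y ∈ Icc (-1 : ℝ) 1) :
    lorentzPoly d A y ^ q * ((y + 1) / (q * d + 1)) ≤ ∫ x in (-1)..y, lorentzPoly d A x ^ q := by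
  have hy' : -y ∈ Icc (-1 : ℝ) 1 := ⟨neg_le_neg hy.2, neg_le.1 hy.1⟩
  have := lorentzPoly_rpow_mul_le_integral_right (d := d) (A := fun j => A (d - j))
    (fun j _ => hA _ (Nat.sub_le d j)) hq hy'
  simp only [← lorentzPoly_neg, neg_neg, sub_neg_eq_add, add_comm 1 y] at this
  rwa [intervalIntegral.integral_comp_neg (fun x => lorentzPoly d A x ^ q), neg_neg] at this

theorem lorentzPoly_rpow_le_integral (hA : ∀ j ≤ d, 0 ≤ A j) (hq : 0 < q)
    (hy : y ∈ Icc (-1 : ℝ) 1) :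
    lorentzPoly d A y ^ q ≤ (q * d + 1) / 2 * ∫ x in (-1)..1, lorentzPoly d A x ^ q := by
  have hcont : Continuous fun x => lorentzPoly d A x ^ q :=
    (continuous_lorentzPoly d A).rpow_const fun _ => Or.inr hq.le
  rw [← intervalIntegral.integral_add_adjacent_intervals (b := y)
    (hcont.intervalIntegrable _ _) (hcont.intervalIntegrable _ _)]
  have hL := lorentzPoly_rpow_mul_le_integral_left hA hq hy
  have hR := lorentzPoly_rpow_mul_le_integral_right hA hq hy
  have hqd : 0 < q * d + 1 := by positivity
  calc lorentzPoly d A y ^ q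
      = (q * d + 1) / 2 * (lorentzPoly d A y ^ q * ((y + 1) / (q * d + 1)) +
          lorentzPoly d A y ^ q * ((1 - y) / (q * d + 1))) := by field_simp; ring
    _ ≤ _ := by gcongr

end Lorentz

theorem nikolskii_lorentz (d : ℕ) (p q : ℝ) (hq : 0 < q) (hqp : q < p)
    (f : ℝ → ℝ) (A : ℕ → ℝ) (hA : ∀ j ≤ d, 0 ≤ A j)
    (hf : ∀ x : ℝ, f x = ∑ j ∈ range (d + 1), A j * (1 - x) ^ j * (x + 1) ^ (d - j)) :
    (∫ x in (-1 : ℝ)..1, f x ^ p) ^ (1 / p) ≤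
      ((q * d + 1) / 2) ^ (1 / q - 1 / p) * (∫ x in (-1 : ℝ)..1, f x ^ q) ^ (1 / q) := by
  obtain rfl : f = lorentzPoly d A := funext hf
  have hcont := (continuous_lorentzPoly d A).continuousOn (s := Icc (-1) 1)
  obtain ⟨y, hy, hmax⟩ := isCompact_Icc.exists_isMaxOn (nonempty_Icc.2 (by norm_num)) hcont
  exact intervalIntegral_rpow_one_div_le_of_rpow_le (by norm_num) hq hqp.le hcont
    (fun _ hx => lorentzPoly_nonneg hA hx) hmax (by positivity)
    (lorentzPoly_rpow_le_integral hA hq hy)
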